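/- arXiv:1503.06819 — 2 statements merged into one kernel-verified Lean document; each statement's English description precedes it below -/
import Mathlib

section
/- In the McAfee auction Case I, a winning buyer cannot lower her payment by misreporting: if buyer j ≤ k reports any bid b' instead of b_(j) while all other reports are fixed, then whenever she still wins, the price she pays is unchanged (it does not depend on her own bid). -/
/-!
Sorting `x ::ₘ others` in decreasing order inserts `x` into the sorted list of the other bids.
As long as `x` is at least the entry at position `k - 1`, it is inserted at or before that
position, so whatever its value, position `k` of the result holds the old entry at `k - 1`.
-/

/-- The `k`-th highest element (0-indexed) of a multiset of reals, with
default value `0`. -/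
noncomputable def nthHighest (M : Multiset ℝ) (k : ℕ) : ℝ :=
  (M.sort (· ≥ ·)).getD k 0

theorem Multiset.sort_cons_eq_orderedInsert {α : Type*} (r : α → α → Prop) [DecidableRel r]
    [IsTrans α r] [Std.Antisymm r] [Std.Total r] (a : α) (s : Multiset α) :
    (a ::ₘ s).sort r = (s.sort r).orderedInsert r a :=
  Quot.inductionOn s fun l => by simp [List.mergeSort_eq_insertionSort]

theorem List.getD_succ_orderedInsert_ge {α : Type*} [LinearOrder α] {l : List α} {n : ℕ} {x : α}
    (d : α) (hn : n < l.length) (hx : l[n] ≤ x) :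
    (l.orderedInsert (· ≥ ·) x).getD (n + 1) d = l.getD n d := by
  induction l generalizing n with
  | nil => simp at hn
  | cons a t ih =>
    by_cases hax : x ≥ a
    · simp [orderedInsert_cons_of_le _ _ hax]
    · rw [orderedInsert_of_not_le _ _ hax]
      cases n with
      | zero => exact absurd hx (by simpa using hax)
      | succ m => simpa using ih (by simpa using hn) hx

/-- McAfee Case I price-independence: if a buyer's report stays among the top
`k` bids (i.e. it is at least the `k`-th highest of the other bids), then the
`(k+1)`-st highest bid of the combined multiset — and hence the trade price —
does not depend on her own report. -/
theorem stmt_6 (others : Multiset ℝ) (k : ℕ) (hk : 1 ≤ k) (x y : ℝ)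
    (hx : nthHighest others (k - 1) ≤ x) (hy : nthHighest others (k - 1) ≤ y) :
    nthHighest (x ::ₘ others) k = nthHighest (y ::ₘ others) k := by
  obtain ⟨n, rfl⟩ : ∃ n, k = n + 1 := ⟨k - 1, by omega⟩
  simp only [nthHighest, Multiset.sort_cons_eq_orderedInsert, Nat.add_sub_cancel] at hx hy ⊢
  by_cases hn : n < (others.sort (· ≥ ·)).length
  · rw [List.getD_eq_getElem _ _ hn] at hx hy
    rw [List.getD_succ_orderedInsert_ge _ hn hx, List.getD_succ_orderedInsert_ge _ hn hy]
  · have hlen (z : ℝ) : ((others.sort (· ≥ ·)).orderedInsert (· ≥ ·) z).length ≤ n + 1 := by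
      rw [List.orderedInsert_length]; omega
    rw [List.getD_eq_default _ _ (hlen x), List.getD_eq_default _ _ (hlen y)]
end

section
/- Monotonicity of matching under edge addition: if buyer u truthfully reports more group memberships, the bipartite graph gains edges incident to u, and the maximum matching size does not decrease; moreover, adding edges incident to u never causes u to go from 'covered by some maximum matching' to 'covered by no maximum matching'. -/
/-- Monotonicity of matching under addition of edges incident to a fixed
vertex `u`: (1) the matching number does not decrease; (2) if some maximum
matching of the smaller graph covers `u`, then some maximum matching of the
larger graph covers `u`. -/
theorem stmt_12 {V : Type*} [Fintype V] (G G' : SimpleGraph V) (u : V)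
    (hle : G ≤ G')
    (hnew : ∀ e ∈ G'.edgeSet \ G.edgeSet, u ∈ e) :
    (∀ M : G.Subgraph, M.IsMatching →
      ∃ M' : G'.Subgraph, M'.IsMatching ∧ M.verts.ncard ≤ M'.verts.ncard) ∧
    ((∃ M : G.Subgraph, M.IsMatching ∧ u ∈ M.verts ∧
        ∀ N : G.Subgraph, N.IsMatching → N.verts.ncard ≤ M.verts.ncard) →
      (∃ M' : G'.Subgraph, M'.IsMatching ∧ u ∈ M'.verts ∧
        ∀ N : G'.Subgraph, N.IsMatching → N.verts.ncard ≤ M'.verts.ncard)) := by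
  -- lifting a matching of G to G'
  have lift : ∀ M : G.Subgraph, M.IsMatching →
      ∃ M' : G'.Subgraph, M'.IsMatching ∧ M'.verts = M.verts := by
    intro M hM
    refine ⟨M.map (SimpleGraph.Hom.ofLE hle), hM.map_ofLE hle, ?_⟩
    simp [SimpleGraph.Subgraph.map_verts]
  constructor
  · intro M hM
    obtain ⟨M', hM', hv⟩ := lift M hM
    exact ⟨M', hM', by rw [hv]⟩
  · rintro ⟨M, hM, huM, hmax⟩
    -- get a maximum matching M' of G'
    set S : Set ℕ := {n | ∃ N : G'.Subgraph, N.IsMatching ∧ N.verts.ncard = n} with hS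
    have hne : S.Nonempty := by
      refine ⟨(⊥ : G'.Subgraph).verts.ncard, ⊥, ?_, rfl⟩
      intro v hv
      simp at hv
    have hbdd : BddAbove S := by
      refine ⟨Fintype.card V, ?_⟩
      rintro n ⟨N, _, rfl⟩
      calc N.verts.ncard ≤ (Set.univ : Set V).ncard :=
            Set.ncard_le_ncard (Set.subset_univ _) Set.finite_univ
        _ = Fintype.card V := by simp [Set.ncard_univ]
    obtain ⟨M', hM', hcard⟩ := Nat.sSup_mem hne hbdd
    have hMmax : ∀ N : G'.Subgraph, N.IsMatching → N.verts.ncard ≤ M'.verts.ncard := by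
      intro N hN
      rw [hcard]
      exact le_csSup hbdd ⟨N, hN, rfl⟩
    by_cases hu : u ∈ M'.verts
    · exact ⟨M', hM', hu, hMmax⟩
    · -- M' avoids u, hence is a matching of G
      have hadj : ∀ ⦃a b : V⦄, M'.Adj a b → G.Adj a b := by
        intro a b hab
        have hG' : G'.Adj a b := M'.adj_sub hab
        by_contra hG
        have : u ∈ s(a, b) := hnew _ ⟨hG', fun h => hG h⟩
        rcases Sym2.mem_iff.mp this with rfl | rfl
        · exact hu (M'.edge_vert hab)
        · exact hu (M'.edge_vert hab.symm)
      let N : G.Subgraph :=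
        { verts := M'.verts
          Adj := M'.Adj
          adj_sub := fun h => hadj h
          edge_vert := fun h => M'.edge_vert h
          symm := M'.symm }
      have hN : N.IsMatching := fun v hv => hM' hv
      have h1 : M'.verts.ncard ≤ M.verts.ncard := by
        have := hmax N hN
        simpa [N] using this
      obtain ⟨M'', hM'', hv⟩ := lift M hM
      refine ⟨M'', hM'', by rw [hv]; exact huM, ?_⟩
      intro N' hN'
      rw [hv]
      exact (hMmax N' hN').trans h1
end
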